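/- Let P_i(t,x,x') be smooth functions satisfying, identically in (t,x,x'), the relation ∂P_i/∂x_j - ∂P_j/∂x_i = (1/2)[∂²P_i/∂t∂x'_j - ∂²P_j/∂t∂x'_i + Σ_k (∂²P_i/∂x_k∂x'_j - ∂²P_j/∂x_k∂x'_i) x'_k] for all i,j. Then the mixed second derivatives satisfy the cyclic identity: ∂²P_i/∂x_l∂x'_j - ∂²P_j/∂x_l∂x'_i = ∂²P_i/∂x_j∂x'_l - ∂²P_l/∂x_j∂x'_i + ∂²P_l/∂x_i∂x'_j - ∂²P_j/∂x_i∂x'_l for all i,j,l. -/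

import Mathlib

open Function

variable {n : ℕ}

/-- Partial derivative w.r.t. time of a function of (t, x, x'). -/
noncomputable def pT3 (f : ℝ → (Fin n → ℝ) → (Fin n → ℝ) → ℝ) (t : ℝ) (x v : Fin n → ℝ) : ℝ :=
  deriv (fun s => f s x v) t

/-- Partial derivative w.r.t. x_i of a function of (t, x, x'). -/
noncomputable def pX3 (f : ℝ → (Fin n → ℝ) → (Fin n → ℝ) → ℝ) (i : Fin n) (t : ℝ)
    (x v : Fin n → ℝ) : ℝ :=
  deriv (fun s => f t (Function.update x i s) v) (x i)

/-- Partial derivative w.r.t. x'_i of a function of (t, x, x'). -/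
noncomputable def pV3 (f : ℝ → (Fin n → ℝ) → (Fin n → ℝ) → ℝ) (i : Fin n) (t : ℝ)
    (x v : Fin n → ℝ) : ℝ :=
  deriv (fun s => f t x (Function.update v i s)) (v i)

/-- Partial derivative w.r.t. time of a function of (t, x, x', x''). -/
noncomputable def pT4 (F : ℝ → (Fin n → ℝ) → (Fin n → ℝ) → (Fin n → ℝ) → ℝ) (t : ℝ)
    (x v a : Fin n → ℝ) : ℝ :=
  deriv (fun s => F s x v a) t

/-- Partial derivative w.r.t. x_i of a function of (t, x, x', x''). -/
noncomputable def pX4 (F : ℝ → (Fin n → ℝ) → (Fin n → ℝ) → (Fin n → ℝ) → ℝ) (i : Fin n) (t : ℝ)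
    (x v a : Fin n → ℝ) : ℝ :=
  deriv (fun s => F t (Function.update x i s) v a) (x i)

/-- Partial derivative w.r.t. x'_i of a function of (t, x, x', x''). -/
noncomputable def pV4 (F : ℝ → (Fin n → ℝ) → (Fin n → ℝ) → (Fin n → ℝ) → ℝ) (i : Fin n) (t : ℝ)
    (x v a : Fin n → ℝ) : ℝ :=
  deriv (fun s => F t x (Function.update v i s) a) (v i)

/-- Partial derivative w.r.t. x''_i of a function of (t, x, x', x''). -/
noncomputable def pA4 (F : ℝ → (Fin n → ℝ) → (Fin n → ℝ) → (Fin n → ℝ) → ℝ) (i : Fin n) (t : ℝ)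
    (x v a : Fin n → ℝ) : ℝ :=
  deriv (fun s => F t x v (Function.update a i s)) (a i)

/-- The Euler–Lagrange expression E_i of a Lagrangian L(t,x,x'), viewed as a function of
(t, x, x', x''):  E_i = ∂²L/∂x'_i∂t + Σ_j (∂²L/∂x'_i∂x_j) x'_j + Σ_j (∂²L/∂x'_i∂x'_j) x''_j
  - ∂L/∂x_i. -/
noncomputable def EulerLagrange (L : ℝ → (Fin n → ℝ) → (Fin n → ℝ) → ℝ) (i : Fin n) (t : ℝ)
    (x v a : Fin n → ℝ) : ℝ :=
  pT3 (pV3 L i) t x v + (∑ j, pX3 (pV3 L i) j t x v * v j)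
    + (∑ j, pV3 (pV3 L i) j t x v * a j) - pX3 L i t x v

/-- The total time derivative D_t = ∂/∂t + Σ_k x'_k ∂/∂x_k + Σ_k x''_k ∂/∂x'_k acting on a
function of (t, x, x', x''). -/
noncomputable def Dt4 (F : ℝ → (Fin n → ℝ) → (Fin n → ℝ) → (Fin n → ℝ) → ℝ) (t : ℝ)
    (x v a : Fin n → ℝ) : ℝ :=
  pT4 F t x v a + (∑ k, v k * pX4 F k t x v a) + (∑ k, a k * pV4 F k t x v a)

/-- The total time derivative including the Σ_k x'''_k ∂/∂x''_k term, with x''' = b a free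
variable. -/
noncomputable def Dt5 (F : ℝ → (Fin n → ℝ) → (Fin n → ℝ) → (Fin n → ℝ) → ℝ) (b : Fin n → ℝ)
    (t : ℝ) (x v a : Fin n → ℝ) : ℝ :=
  Dt4 F t x v a + ∑ k, b k * pA4 F k t x v a

/-!
Write `∂_d` for the derivative along a vector `d` of `(t, x, x')`-space. The hypothesis says
`∂_{x_j} P_i - ∂_{x_i} P_j = ½ ∂_w (∂_{x'_j} P_i - ∂_{x'_i} P_j)`, where `w(t, x, x') = (1, x', 0)`
is the direction of `D_t`. Differentiate it along `x'_l`: since `∂_{x'_l} w = e_{x_l}`, this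
produces a third-order term `½ ∂_{x'_l} ∂_w ∂_{x'_j} P_i - …` and a second-order term
`½ ∂_{x_l} (∂_{x'_j} P_i - ∂_{x'_i} P_j)`. In the sum over the cyclic permutations of `(i, j, l)`
the third-order terms cancel by symmetry of the third derivative, and, by symmetry of the second
derivative, the second-order terms are `-½` times the left-hand side. Hence the cyclic sum of
`∂_{x'_l} (∂_{x_j} P_i - ∂_{x_i} P_j)` vanishes, which after commuting `∂_{x'}` and `∂_x` is the
identity.
-/

section DirDeriv

variable {E : Type*} [NormedAddCommGroup E] [NormedSpace ℝ E]

noncomputable def dirDeriv (d : E) (f : E → ℝ) (p : E) : ℝ :=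
  fderiv ℝ f p d

theorem ContDiff.dirDeriv {f : E → ℝ} {m k : WithTop ℕ∞} (hf : ContDiff ℝ k f) (hmk : m + 1 ≤ k)
    (d : E) : ContDiff ℝ m (dirDeriv d f) :=
  (hf.fderiv_right hmk).clm_apply contDiff_const

theorem dirDeriv_sub {f g : E → ℝ} (hf : Differentiable ℝ f) (hg : Differentiable ℝ g) (d : E) :
    dirDeriv d (f - g) = dirDeriv d f - dirDeriv d g := by
  ext p
  simp [dirDeriv, fderiv_sub (hf p) (hg p)]

theorem dirDeriv_const_mul {f : E → ℝ} {p : E} (hf : DifferentiableAt ℝ f p) (c : ℝ) (d : E) :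
    dirDeriv d (fun q => c * f q) p = c * dirDeriv d f p := by
  simp [dirDeriv, fderiv_const_mul hf]

theorem dirDeriv_dirDeriv {f : E → ℝ} {p : E} (hf : DifferentiableAt ℝ (fderiv ℝ f) p)
    (d₁ d₂ : E) : dirDeriv d₁ (dirDeriv d₂ f) p = fderiv ℝ (fderiv ℝ f) p d₁ d₂ := by
  change fderiv ℝ (fun q => fderiv ℝ f q d₂) p d₁ = _
  simp [fderiv_clm_apply hf (differentiableAt_const d₂)]

theorem dirDeriv_comm {f : E → ℝ} (hf : ContDiff ℝ 2 f) (d₁ d₂ : E) :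
    dirDeriv d₁ (dirDeriv d₂ f) = dirDeriv d₂ (dirDeriv d₁ f) := by
  ext p
  have hdf : Differentiable ℝ (fderiv ℝ f) :=
    (hf.fderiv_right (m := 1) (by norm_num)).differentiable one_ne_zero
  rw [dirDeriv_dirDeriv (hdf p), dirDeriv_dirDeriv (hdf p)]
  exact (hf.contDiffAt.isSymmSndFDerivAt (by simp)).eq d₁ d₂

theorem dirDeriv_comm_outer {f : E → ℝ} (hf : ContDiff ℝ 3 f) (d₁ d₂ d₃ : E) :
    dirDeriv d₁ (dirDeriv d₂ (dirDeriv d₃ f)) = dirDeriv d₃ (dirDeriv d₂ (dirDeriv d₁ f)) := by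
  rw [dirDeriv_comm (hf.dirDeriv (by norm_num) d₃), dirDeriv_comm (hf.of_le (by norm_num)) d₁ d₃,
    dirDeriv_comm (hf.dirDeriv (by norm_num) d₁)]

theorem dirDeriv_fderiv_apply {f : E → ℝ} {w : E → E} {w' : E →L[ℝ] E} {p : E}
    (hf : ContDiff ℝ 2 f) (hw : HasFDerivAt w w' p) (e : E) :
    dirDeriv e (fun q => fderiv ℝ f q (w q)) p
      = dirDeriv e (dirDeriv (w p) f) p + dirDeriv (w' e) f p := by
  have hdf : DifferentiableAt ℝ (fderiv ℝ f) p :=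
    (hf.fderiv_right (m := 1) (by norm_num)).differentiable one_ne_zero p
  rw [dirDeriv_dirDeriv hdf]
  simp [dirDeriv, fderiv_clm_apply hdf hw.differentiableAt, hw.fderiv, add_comm]

end DirDeriv

section Helmholtz

variable {E ι : Type*} [NormedAddCommGroup E] [NormedSpace ℝ E]
  {F : ι → E → ℝ} {X V : ι → E} {w : E → E} {w' : E →L[ℝ] E} {p : E}

def HelmholtzCondition (F : ι → E → ℝ) (X V : ι → E) (w : E → E) : Prop :=
  ∀ a b q, dirDeriv (X b) (F a) q - dirDeriv (X a) (F b) q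
    = 1 / 2 * fderiv ℝ (dirDeriv (V b) (F a) - dirDeriv (V a) (F b)) q (w q)

theorem HelmholtzCondition.dirDeriv_sub_dirDeriv (h : HelmholtzCondition F X V w)
    (hF : ∀ a, ContDiff ℝ 3 (F a)) (hw : HasFDerivAt w w' p) (hwV : ∀ c, w' (V c) = X c)
    (a b c : ι) :
    dirDeriv (V c) (dirDeriv (X b) (F a)) p - dirDeriv (V c) (dirDeriv (X a) (F b)) p
      = 1 / 2 * (dirDeriv (V c) (dirDeriv (w p) (dirDeriv (V b) (F a))) p
          - dirDeriv (V c) (dirDeriv (w p) (dirDeriv (V a) (F b))) p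
        + (dirDeriv (X c) (dirDeriv (V b) (F a)) p - dirDeriv (X c) (dirDeriv (V a) (F b)) p)) := by
  have hC2 : ∀ a d, ContDiff ℝ 2 (dirDeriv d (F a)) := fun a d => (hF a).dirDeriv (by norm_num) d
  have hD1 : ∀ a d, Differentiable ℝ (dirDeriv d (F a)) := fun a d =>
    (hC2 a d).differentiable two_ne_zero
  have hD2 : ∀ a d d', Differentiable ℝ (dirDeriv d' (dirDeriv d (F a))) := fun a d d' =>
    ((hC2 a d).dirDeriv (by norm_num) d').differentiable one_ne_zero
  set Q := dirDeriv (V b) (F a) - dirDeriv (V a) (F b)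
  have hQ : ContDiff ℝ 2 Q := (hC2 a (V b)).sub (hC2 b (V a))
  have hQw : DifferentiableAt ℝ (fun q => fderiv ℝ Q q (w q)) p :=
    ((hQ.fderiv_right (m := 1) (by norm_num)).differentiable one_ne_zero p).clm_apply
      hw.differentiableAt
  have hderiv : dirDeriv (V c) (dirDeriv (X b) (F a) - dirDeriv (X a) (F b)) p
      = dirDeriv (V c) (fun q => 1 / 2 * fderiv ℝ Q q (w q)) p :=
    congrArg (dirDeriv (V c) · p) (funext (h a b))
  rw [dirDeriv_sub (hD1 a _) (hD1 b _), Pi.sub_apply, dirDeriv_const_mul hQw,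
    dirDeriv_fderiv_apply hQ hw, hwV, dirDeriv_sub (hD1 a _) (hD1 b _),
    dirDeriv_sub (hD2 a _ _) (hD2 b _ _), dirDeriv_sub (hD1 a _) (hD1 b _)] at hderiv
  simpa only [Pi.sub_apply] using hderiv

theorem HelmholtzCondition.cyclic (h : HelmholtzCondition F X V w)
    (hF : ∀ a, ContDiff ℝ 3 (F a)) (hw : HasFDerivAt w w' p) (hwV : ∀ c, w' (V c) = X c)
    (i j l : ι) :
    dirDeriv (X l) (dirDeriv (V j) (F i)) p - dirDeriv (X l) (dirDeriv (V i) (F j)) p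
      = dirDeriv (X j) (dirDeriv (V l) (F i)) p - dirDeriv (X j) (dirDeriv (V i) (F l)) p
        + dirDeriv (X i) (dirDeriv (V j) (F l)) p - dirDeriv (X i) (dirDeriv (V l) (F j)) p := by
  have hF2 : ∀ a, ContDiff ℝ 2 (F a) := fun a => (hF a).of_le (by norm_num)
  have hij := h.dirDeriv_sub_dirDeriv hF hw hwV i j l
  have hjl := h.dirDeriv_sub_dirDeriv hF hw hwV j l i
  have hli := h.dirDeriv_sub_dirDeriv hF hw hwV l i j
  rw [dirDeriv_comm (hF2 i) (V l) (X j), dirDeriv_comm (hF2 j) (V l) (X i)] at hij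
  rw [dirDeriv_comm (hF2 j) (V i) (X l), dirDeriv_comm (hF2 l) (V i) (X j)] at hjl
  rw [dirDeriv_comm (hF2 l) (V j) (X i), dirDeriv_comm (hF2 i) (V j) (X l)] at hli
  have hi := congrFun (dirDeriv_comm_outer (hF i) (V l) (w p) (V j)) p
  have hj := congrFun (dirDeriv_comm_outer (hF j) (V l) (w p) (V i)) p
  have hl := congrFun (dirDeriv_comm_outer (hF l) (V i) (w p) (V j)) p
  linarith

end Helmholtz

abbrev Jet1 (n : ℕ) := ℝ × (Fin n → ℝ) × (Fin n → ℝ)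

namespace Jet1

def tDir : Jet1 n := (1, 0, 0)

def xDir (i : Fin n) : Jet1 n := (0, Pi.single i 1, 0)

def vDir (i : Fin n) : Jet1 n := (0, 0, Pi.single i 1)

/-- The direction of `D_t = ∂_t + Σ_k x'_k ∂_{x_k}` at the point `(t, x, x')`. -/
def totalDir (p : Jet1 n) : Jet1 n := (1, p.2.2, 0)

theorem differentiable_totalDir : Differentiable ℝ (totalDir : Jet1 n → Jet1 n) := by
  unfold totalDir; fun_prop

theorem fderiv_totalDir_vDir (p : Jet1 n) (i : Fin n) :
    fderiv ℝ totalDir p (vDir i) = xDir i := by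
  have h : HasFDerivAt (totalDir : Jet1 n → Jet1 n)
      ((0 : Jet1 n →L[ℝ] ℝ).prod
        (((ContinuousLinearMap.snd ℝ _ _).comp (ContinuousLinearMap.snd ℝ _ _)).prod 0)) p :=
    (hasFDerivAt_const _ _).prodMk
      (((hasFDerivAt_snd.comp p hasFDerivAt_snd)).prodMk (hasFDerivAt_const _ _))
  rw [h.fderiv]
  rfl

theorem fderiv_apply_totalDir (G : Jet1 n → ℝ) (p : Jet1 n) :
    fderiv ℝ G p (totalDir p) = dirDeriv tDir G p + ∑ k, dirDeriv (xDir k) G p * p.2.2 k := by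
  have h : totalDir p = tDir + ∑ k, p.2.2 k • xDir k := by
    ext <;> simp [totalDir, tDir, xDir, Prod.fst_sum, Prod.snd_sum, Pi.single_apply]
  simp [h, dirDeriv, mul_comm]

variable {f : ℝ → (Fin n → ℝ) → (Fin n → ℝ) → ℝ} {t : ℝ} {x v : Fin n → ℝ}

theorem pT3_eq_dirDeriv (hf : DifferentiableAt ℝ (fun p : Jet1 n => f p.1 p.2.1 p.2.2) (t, x, v)) :
    pT3 f t x v = dirDeriv tDir (fun p : Jet1 n => f p.1 p.2.1 p.2.2) (t, x, v) := by
  have hγ : HasDerivAt (fun s => ((s, x, v) : Jet1 n)) tDir t :=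
    (hasDerivAt_id t).prodMk (hasDerivAt_const t (x, v))
  exact (hf.hasFDerivAt.comp_hasDerivAt t hγ).deriv

theorem pX3_eq_dirDeriv (hf : DifferentiableAt ℝ (fun p : Jet1 n => f p.1 p.2.1 p.2.2) (t, x, v))
    (i : Fin n) :
    pX3 f i t x v = dirDeriv (xDir i) (fun p : Jet1 n => f p.1 p.2.1 p.2.2) (t, x, v) :=
  (hf.hasFDerivAt.comp_hasDerivAt_of_eq (x i) ((hasDerivAt_const _ t).prodMk
    ((hasDerivAt_update x i _).prodMk (hasDerivAt_const _ v))) (by simp)).deriv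

theorem pV3_eq_dirDeriv (hf : DifferentiableAt ℝ (fun p : Jet1 n => f p.1 p.2.1 p.2.2) (t, x, v))
    (i : Fin n) :
    pV3 f i t x v = dirDeriv (vDir i) (fun p : Jet1 n => f p.1 p.2.1 p.2.2) (t, x, v) :=
  (hf.hasFDerivAt.comp_hasDerivAt_of_eq (v i) ((hasDerivAt_const _ t).prodMk
    ((hasDerivAt_const _ x).prodMk (hasDerivAt_update v i _))) (by simp)).deriv

theorem pV3_eq_dirDeriv_fun (hf : Differentiable ℝ (fun p : Jet1 n => f p.1 p.2.1 p.2.2))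
    (i : Fin n) :
    pV3 f i = fun t x v => dirDeriv (vDir i) (fun p : Jet1 n => f p.1 p.2.1 p.2.2) (t, x, v) :=
  funext fun _ => funext fun _ => funext fun _ => pV3_eq_dirDeriv (hf _) i

theorem pT3_pV3_eq_dirDeriv (hf : ContDiff ℝ 2 (fun p : Jet1 n => f p.1 p.2.1 p.2.2))
    (i : Fin n) :
    pT3 (pV3 f i) t x v
      = dirDeriv tDir (dirDeriv (vDir i) (fun p : Jet1 n => f p.1 p.2.1 p.2.2)) (t, x, v) := by
  rw [pV3_eq_dirDeriv_fun (hf.differentiable two_ne_zero)]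
  exact pT3_eq_dirDeriv (((hf.dirDeriv le_rfl _).differentiable one_ne_zero) _)

theorem pX3_pV3_eq_dirDeriv (hf : ContDiff ℝ 2 (fun p : Jet1 n => f p.1 p.2.1 p.2.2))
    (i k : Fin n) :
    pX3 (pV3 f i) k t x v
      = dirDeriv (xDir k) (dirDeriv (vDir i) (fun p : Jet1 n => f p.1 p.2.1 p.2.2)) (t, x, v) := by
  rw [pV3_eq_dirDeriv_fun (hf.differentiable two_ne_zero)]
  exact pX3_eq_dirDeriv (((hf.dirDeriv le_rfl _).differentiable one_ne_zero) _) k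

end Jet1

/-- if C³ functions P_i(t,x,x') satisfy
∂P_i/∂x_j - ∂P_j/∂x_i = (1/2)[∂²P_i/∂t∂x'_j - ∂²P_j/∂t∂x'_i
  + Σ_k (∂²P_i/∂x_k∂x'_j - ∂²P_j/∂x_k∂x'_i) x'_k] identically, then the cyclic identity
for mixed second derivatives holds. -/
theorem helmholtz_P_cyclic_identity (n : ℕ)
    (P : Fin n → ℝ → (Fin n → ℝ) → (Fin n → ℝ) → ℝ)
    (hP : ∀ i, ContDiff ℝ 3 (fun p : ℝ × (Fin n → ℝ) × (Fin n → ℝ) => P i p.1 p.2.1 p.2.2))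
    (hyp : ∀ (i j : Fin n) (t : ℝ) (x v : Fin n → ℝ),
      pX3 (P i) j t x v - pX3 (P j) i t x v
        = (1 / 2) * (pT3 (pV3 (P i) j) t x v - pT3 (pV3 (P j) i) t x v
            + ∑ k, (pX3 (pV3 (P i) j) k t x v - pX3 (pV3 (P j) i) k t x v) * v k)) :
    ∀ (i j l : Fin n) (t : ℝ) (x v : Fin n → ℝ),
      pX3 (pV3 (P i) j) l t x v - pX3 (pV3 (P j) i) l t x v
        = pX3 (pV3 (P i) l) j t x v - pX3 (pV3 (P l) i) j t x v
          + pX3 (pV3 (P l) j) i t x v - pX3 (pV3 (P j) l) i t x v := by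
  set F : Fin n → Jet1 n → ℝ := fun a p => P a p.1 p.2.1 p.2.2
  have hF2 : ∀ a, ContDiff ℝ 2 (F a) := fun a => (hP a).of_le (by norm_num)
  have hFV : ∀ a b, Differentiable ℝ (dirDeriv (Jet1.vDir b) (F a)) := fun a b =>
    ((hF2 a).dirDeriv le_rfl _).differentiable one_ne_zero
  have hH : HelmholtzCondition F Jet1.xDir Jet1.vDir Jet1.totalDir := by
    intro a b q
    have h := hyp a b q.1 q.2.1 q.2.2
    simp only [Jet1.pX3_eq_dirDeriv ((hF2 _).differentiable two_ne_zero _),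
      Jet1.pT3_pV3_eq_dirDeriv (hF2 _), Jet1.pX3_pV3_eq_dirDeriv (hF2 _)] at h
    simpa only [Jet1.fderiv_apply_totalDir, dirDeriv_sub (hFV a b) (hFV b a), Pi.sub_apply]
      using h
  intro i j l t x v
  simp only [Jet1.pX3_pV3_eq_dirDeriv (hF2 _)]
  exact hH.cyclic hP (Jet1.differentiable_totalDir _).hasFDerivAt (Jet1.fderiv_totalDir_vDir _)
    i j l
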